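/- arXiv:math/9903052 — 6 statements merged into one kernel-verified Lean document; each statement's English description precedes it below -/
import Mathlib

section
/- In Cl(𝔤), the element γ = −(1/6) Σ_{a,b,c} f_{abc} x_a x_b x_c squares to a scalar: γ·γ = −(1/48)·(Σ_{a,b,c} f_{abc}²)·1. -/
/-!
Put `g_a = -½ ∑ f_{ars} x_r x_s`. The Clifford relations give `{x_d, γ} = g_d` and
`[g_a, x_b] = ∑_s f_{abs} x_s`; the latter makes `[g_a, ·]` act on quadratic elements through
`ad e_a`, so the Jacobi identity yields `[g_a, g_b] = ∑_s f_{abs} g_s` and, as `3γ = ∑_a x_a g_a`,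
`[g_a, γ] = 0`. Moving `γ` through `3γ² = ∑_a x_a g_a γ` then gives `6γ² = ∑_a g_a²`.
Independently, expanding `{γ, ∑ f_{abc} x_a x_b x_c} = -12γ²` factor by factor gives
`-12γ² = -6 ∑_a g_a² - ½ ∑ f_{abc}²`, the scalar coming from a symmetric tensor contracted
against `x_a x_s`. Eliminating `∑_a g_a²` leaves `γ² = -(1/48) ∑ f_{abc}²`.
-/

open Finset

theorem cyclic_of_antisymm {α M : Type*} [InvolutiveNeg M] {f : α → α → α → M}
    (hf₁₂ : ∀ a b c, f b a c = -f a b c) (hf₂₃ : ∀ a b c, f a c b = -f a b c) (a b c : α) :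
    f a b c = f b c a := by
  rw [← neg_neg (f b c a), ← hf₂₃, hf₁₂]

noncomputable section CliffordElements

variable {ι : Type*} [Fintype ι] {A : Type*} [Ring A] [Algebra ℝ A]
  (x : ι → A) (f : ι → ι → ι → ℝ)

def quadraticElement (a : ι) : A := (-(1 / 2 : ℝ)) • ∑ r, ∑ s, f a r s • (x r * x s)

def cubicElement : A := (-(1 / 6 : ℝ)) • ∑ a, ∑ b, ∑ c, f a b c • (x a * x b * x c)

theorem sum_smul_mul_eq_neg_two_smul_quadraticElement (a : ι) :
    ∑ r, ∑ s, f a r s • (x r * x s) = (-2 : ℝ) • quadraticElement x f a := by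
  rw [quadraticElement, smul_smul]; norm_num

theorem cubicElement_eq_smul_sum_mul_quadraticElement :
    cubicElement x f = (1 / 3 : ℝ) • ∑ a, x a * quadraticElement x f a := by
  simp only [cubicElement, quadraticElement, mul_smul_comm, mul_sum, smul_sum, smul_smul,
    mul_assoc]
  norm_num [← mul_assoc]

theorem mul_sum_cubic_add (z : A) (h : ι → A) (hz : ∀ a, z * x a + x a * z = h a)
    (T : ι → ι → ι → ℝ) :
    z * (∑ a, ∑ b, ∑ c, T a b c • (x a * x b * x c))
        + (∑ a, ∑ b, ∑ c, T a b c • (x a * x b * x c)) * z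
      = ∑ a, ∑ b, ∑ c, T a b c • (h a * x b * x c - x a * h b * x c + x a * x b * h c) := by
  have graded_leibniz : ∀ a b c, z * (x a * x b * x c) + x a * x b * x c * z
      = (z * x a + x a * z) * x b * x c - x a * (z * x b + x b * z) * x c
        + x a * x b * (z * x c + x c * z) := by
    intro a b c; noncomm_ring
  simp only [mul_sum, sum_mul, mul_smul_comm, smul_mul_assoc, ← sum_add_distrib, ← smul_add,
    graded_leibniz, hz]

theorem sum_smul_quadraticElement_mul_x_mul_x :
    ∑ a, ∑ b, ∑ c, f a b c • (quadraticElement x f a * x b * x c)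
      = (-2 : ℝ) • ∑ a, quadraticElement x f a * quadraticElement x f a := by
  calc ∑ a, ∑ b, ∑ c, f a b c • (quadraticElement x f a * x b * x c)
      = ∑ a, quadraticElement x f a * ∑ b, ∑ c, f a b c • (x b * x c) := by
        simp only [mul_sum, mul_smul_comm, mul_assoc]
    _ = (-2 : ℝ) • ∑ a, quadraticElement x f a * quadraticElement x f a := by
        simp only [sum_smul_mul_eq_neg_two_smul_quadraticElement, mul_smul_comm, smul_sum]

variable {x f}

theorem sum_smul_x_mul_x_mul_quadraticElement (hf₁₂ : ∀ a b c, f b a c = -f a b c)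
    (hf₂₃ : ∀ a b c, f a c b = -f a b c) :
    ∑ a, ∑ b, ∑ c, f a b c • (x a * x b * quadraticElement x f c)
      = (-2 : ℝ) • ∑ c, quadraticElement x f c * quadraticElement x f c := by
  calc ∑ a, ∑ b, ∑ c, f a b c • (x a * x b * quadraticElement x f c)
      = ∑ a, ∑ b, ∑ c, f c a b • (x a * x b * quadraticElement x f c) := by
        refine sum_congr rfl fun a _ => sum_congr rfl fun b _ => sum_congr rfl fun c _ => ?_
        rw [cyclic_of_antisymm hf₁₂ hf₂₃ c]
    _ = ∑ c, (∑ a, ∑ b, f c a b • (x a * x b)) * quadraticElement x f c := by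
        rw [sum_comm_cycle]
        simp only [sum_mul, smul_mul_assoc]
    _ = (-2 : ℝ) • ∑ c, quadraticElement x f c * quadraticElement x f c := by
        simp only [sum_smul_mul_eq_neg_two_smul_quadraticElement, smul_mul_assoc, smul_sum]

variable [DecidableEq ι]

theorem sum_smul_mul_of_symm (hx : ∀ a b, x a * x b + x b * x a = if a = b then 1 else 0)
    (K : ι → ι → ℝ) (hK : ∀ a b, K a b = K b a) :
    ∑ a, ∑ b, K a b • (x a * x b) = (1 / 2 * ∑ a, K a a) • (1 : A) := by
  have hswap : ∑ a, ∑ b, K a b • (x a * x b) = ∑ a, ∑ b, K a b • (x b * x a) := by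
    rw [sum_comm]; simp_rw [hK]
  have hdouble : (2 : ℝ) • ∑ a, ∑ b, K a b • (x a * x b) = (∑ a, K a a) • (1 : A) := by
    rw [two_smul]; nth_rw 2 [hswap]
    simp only [← sum_add_distrib, ← smul_add, hx, smul_ite, smul_zero, sum_ite_eq, mem_univ,
      if_true, sum_smul]
  linear_combination (norm := module) (1 / 2 : ℝ) • hdouble

theorem quadraticElement_mul_x_sub
    (hx : ∀ a b, x a * x b + x b * x a = if a = b then 1 else 0)
    (hf₂₃ : ∀ a b c, f a c b = -f a b c) (a b : ι) :
    quadraticElement x f a * x b - x b * quadraticElement x f a = ∑ s, f a b s • x s := by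
  have key : ∀ r s, x r * x s * x b - x b * (x r * x s)
      = (if s = b then x r else 0) - (if r = b then x s else 0) := by
    intro r s
    rw [show x r * x s * x b - x b * (x r * x s)
      = x r * (x s * x b + x b * x s) - (x r * x b + x b * x r) * x s by noncomm_ring, hx, hx]
    simp only [mul_ite, ite_mul, mul_one, one_mul, mul_zero, zero_mul]
  have expand : quadraticElement x f a * x b - x b * quadraticElement x f a
      = (-(1 / 2 : ℝ)) • ∑ r, ∑ s, f a r s • (x r * x s * x b - x b * (x r * x s)) := by
    simp only [quadraticElement, smul_mul_assoc, mul_smul_comm, sum_mul, mul_sum, smul_sub,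
      sum_sub_distrib]
  have hswap : ∀ c, f a c b = -f a b c := fun c => hf₂₃ a b c
  simp only [expand, key, smul_sub, sum_sub_distrib, smul_ite, smul_zero, sum_ite_eq',
    sum_ite_irrel, sum_const_zero, mem_univ, if_true, hswap, neg_smul, sum_neg_distrib]
  module

theorem quadraticElement_mul_bivector_sub
    (hx : ∀ a b, x a * x b + x b * x a = if a = b then 1 else 0)
    (hf₂₃ : ∀ a b c, f a c b = -f a b c) (a : ι) (C : ι → ι → ℝ) :
    quadraticElement x f a * (∑ r, ∑ t, C r t • (x r * x t))
        - (∑ r, ∑ t, C r t • (x r * x t)) * quadraticElement x f a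
      = ∑ r, ∑ t, (∑ s, (C s t * f a s r + C r s * f a s t)) • (x r * x t) := by
  have leibniz : ∀ r t,
      quadraticElement x f a * (x r * x t) - x r * x t * quadraticElement x f a
      = (quadraticElement x f a * x r - x r * quadraticElement x f a) * x t
        + x r * (quadraticElement x f a * x t - x t * quadraticElement x f a) := by
    intro r t; noncomm_ring
  simp only [mul_sum, sum_mul, mul_smul_comm, smul_mul_assoc, ← smul_sub, ← sum_sub_distrib,
    leibniz, quadraticElement_mul_x_sub hx hf₂₃]
  simp only [smul_add, smul_sum, smul_smul, sum_add_distrib, add_smul, sum_smul]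
  congr 1
  · rw [sum_comm_cycle]
    exact sum_congr rfl fun _ _ => sum_comm
  · exact sum_congr rfl fun _ _ => sum_comm

theorem quadraticElement_mul_quadraticElement_sub
    (hx : ∀ a b, x a * x b + x b * x a = if a = b then 1 else 0)
    (hf₂₃ : ∀ a b c, f a c b = -f a b c)
    (hfinv : ∀ a b c d, ∑ s, (f a b s * f s c d + f a c s * f b s d + f a d s * f b c s) = 0)
    (a b : ι) :
    quadraticElement x f a * quadraticElement x f b
        - quadraticElement x f b * quadraticElement x f a
      = ∑ s, f a b s • quadraticElement x f s := by
  have coeff : ∀ r t,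
      ∑ s, (f b s t * f a s r + f b r s * f a s t) = ∑ s, f a b s * f s r t := by
    intro r t
    calc ∑ s, (f b s t * f a s r + f b r s * f a s t)
        = ∑ s, f a b s * f s r t
          - ∑ s, (f a b s * f s r t + f a r s * f b s t + f a t s * f b r s) := by
          rw [← sum_sub_distrib]
          refine sum_congr rfl fun s _ => ?_
          rw [hf₂₃ a r s, hf₂₃ a t s]; ring
      _ = ∑ s, f a b s * f s r t := by rw [hfinv, sub_zero]
  have hb : quadraticElement x f b = (-(1 / 2 : ℝ)) • ∑ r, ∑ t, f b r t • (x r * x t) := rfl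
  conv_lhs => rw [hb, mul_smul_comm, smul_mul_assoc, ← smul_sub,
    quadraticElement_mul_bivector_sub hx hf₂₃]
  simp only [coeff, quadraticElement, smul_sum, smul_smul, sum_smul]
  rw [sum_comm_cycle]
  refine sum_congr rfl fun _ _ => sum_congr rfl fun _ _ => sum_congr rfl fun _ _ => ?_
  rw [mul_left_comm]

theorem quadraticElement_commute_cubicElement
    (hx : ∀ a b, x a * x b + x b * x a = if a = b then 1 else 0)
    (hf₂₃ : ∀ a b c, f a c b = -f a b c)
    (hfinv : ∀ a b c d, ∑ s, (f a b s * f s c d + f a c s * f b s d + f a d s * f b c s) = 0)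
    (a : ι) :
    quadraticElement x f a * cubicElement x f = cubicElement x f * quadraticElement x f a := by
  rw [← sub_eq_zero]
  have leibniz : ∀ b, quadraticElement x f a * (x b * quadraticElement x f b)
      - x b * quadraticElement x f b * quadraticElement x f a
      = (quadraticElement x f a * x b - x b * quadraticElement x f a) * quadraticElement x f b
        + x b * (quadraticElement x f a * quadraticElement x f b
          - quadraticElement x f b * quadraticElement x f a) := by
    intro b; noncomm_ring
  have cancel : ∑ b, ∑ s, f a b s • (x b * quadraticElement x f s)
      = -∑ b, ∑ s, f a b s • (x s * quadraticElement x f b) := by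
    rw [sum_comm, ← sum_neg_distrib]
    refine sum_congr rfl fun b _ => ?_
    rw [← sum_neg_distrib]
    refine sum_congr rfl fun s _ => ?_
    rw [hf₂₃, neg_smul]
  rw [cubicElement_eq_smul_sum_mul_quadraticElement, mul_smul_comm, smul_mul_assoc, ← smul_sub,
    mul_sum, sum_mul, ← sum_sub_distrib]
  simp only [leibniz, quadraticElement_mul_x_sub hx hf₂₃,
    quadraticElement_mul_quadraticElement_sub hx hf₂₃ hfinv, sum_mul, mul_sum, smul_mul_assoc,
    mul_smul_comm, sum_add_distrib, cancel, add_neg_cancel, smul_zero]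

theorem x_mul_cubicElement_add (hx : ∀ a b, x a * x b + x b * x a = if a = b then 1 else 0)
    (hf₁₂ : ∀ a b c, f b a c = -f a b c) (hf₂₃ : ∀ a b c, f a c b = -f a b c) (d : ι) :
    x d * cubicElement x f + cubicElement x f * x d = quadraticElement x f d := by
  have leibniz : ∀ b,
      x d * (x b * quadraticElement x f b) + x b * quadraticElement x f b * x d
      = (x d * x b + x b * x d) * quadraticElement x f b
        + x b * (quadraticElement x f b * x d - x d * quadraticElement x f b) := by
    intro b; noncomm_ring
  have hsum : ∑ b, x b * ∑ s, f b d s • x s = (2 : ℝ) • quadraticElement x f d := by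
    simp only [hf₁₂ d, neg_smul, sum_neg_distrib, mul_neg, mul_sum, mul_smul_comm,
      sum_smul_mul_eq_neg_two_smul_quadraticElement]
    module
  rw [cubicElement_eq_smul_sum_mul_quadraticElement, mul_smul_comm, smul_mul_assoc, ← smul_add,
    mul_sum, sum_mul, ← sum_add_distrib]
  simp only [leibniz, hx, quadraticElement_mul_x_sub hx hf₂₃, sum_add_distrib, ite_mul, one_mul,
    zero_mul, sum_ite_eq, mem_univ, if_true, hsum]
  module

theorem sum_mul_smul_x_mul_x_eq_half_sum_sq
    (hx : ∀ a b, x a * x b + x b * x a = if a = b then 1 else 0)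
    (hf₁₂ : ∀ a b c, f b a c = -f a b c) (hf₂₃ : ∀ a b c, f a c b = -f a b c) :
    ∑ a, ∑ b, ∑ c, ∑ s, (f a b c * f b c s) • (x a * x s)
      = (1 / 2 * ∑ a, ∑ b, ∑ c, f a b c ^ 2) • (1 : A) := by
  have hsymm : ∀ a s, ∑ b, ∑ c, f a b c * f b c s = ∑ b, ∑ c, f s b c * f b c a := by
    intro a s
    refine sum_congr rfl fun b _ => sum_congr rfl fun c _ => ?_
    rw [cyclic_of_antisymm hf₁₂ hf₂₃ a, ← cyclic_of_antisymm hf₁₂ hf₂₃ s, mul_comm]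
  calc ∑ a, ∑ b, ∑ c, ∑ s, (f a b c * f b c s) • (x a * x s)
      = ∑ a, ∑ s, (∑ b, ∑ c, f a b c * f b c s) • (x a * x s) := by
        refine sum_congr rfl fun a _ => ?_
        rw [sum_comm_cycle]
        simp only [sum_smul]
    _ = (1 / 2 * ∑ a, ∑ b, ∑ c, f a b c ^ 2) • (1 : A) := by
        rw [sum_smul_mul_of_symm hx _ hsymm]
        congr 2
        refine sum_congr rfl fun a _ => sum_congr rfl fun b _ => sum_congr rfl fun c _ => ?_
        rw [← cyclic_of_antisymm hf₁₂ hf₂₃ a b c, sq]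

theorem sum_smul_x_mul_quadraticElement_mul_x
    (hx : ∀ a b, x a * x b + x b * x a = if a = b then 1 else 0)
    (hf₁₂ : ∀ a b c, f b a c = -f a b c) (hf₂₃ : ∀ a b c, f a c b = -f a b c) :
    ∑ a, ∑ b, ∑ c, f a b c • (x a * quadraticElement x f b * x c)
      = (2 : ℝ) • ∑ b, quadraticElement x f b * quadraticElement x f b
        + (1 / 2 * ∑ a, ∑ b, ∑ c, f a b c ^ 2) • (1 : A) := by
  have hcomm : ∀ a b c, x a * quadraticElement x f b * x c
      = x a * x c * quadraticElement x f b + ∑ s, f b c s • (x a * x s) := by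
    intro a b c
    rw [mul_assoc,
      ← sub_add_cancel (quadraticElement x f b * x c) (x c * quadraticElement x f b),
      quadraticElement_mul_x_sub hx hf₂₃]
    simp only [mul_add, mul_sum, mul_smul_comm, mul_assoc, add_comm]
  have hmixed : ∑ a, ∑ b, ∑ c, f a b c • (x a * x c * quadraticElement x f b)
      = (2 : ℝ) • ∑ b, quadraticElement x f b * quadraticElement x f b := by
    calc ∑ a, ∑ b, ∑ c, f a b c • (x a * x c * quadraticElement x f b)
        = -∑ b, (∑ a, ∑ c, f b a c • (x a * x c)) * quadraticElement x f b := by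
          rw [sum_comm, ← sum_neg_distrib]
          refine sum_congr rfl fun b _ => ?_
          rw [sum_mul, ← sum_neg_distrib]
          refine sum_congr rfl fun a _ => ?_
          rw [sum_mul, ← sum_neg_distrib]
          refine sum_congr rfl fun c _ => ?_
          rw [hf₁₂ b a c, neg_smul, smul_mul_assoc]
      _ = (2 : ℝ) • ∑ b, quadraticElement x f b * quadraticElement x f b := by
          simp only [sum_smul_mul_eq_neg_two_smul_quadraticElement, smul_mul_assoc, smul_sum,
            ← sum_neg_distrib, ← neg_smul, neg_neg]
  simp only [hcomm, smul_add, sum_add_distrib, hmixed, smul_sum, smul_smul,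
    sum_mul_smul_x_mul_x_eq_half_sum_sq hx hf₁₂ hf₂₃]

theorem sum_quadraticElement_mul_self
    (hx : ∀ a b, x a * x b + x b * x a = if a = b then 1 else 0)
    (hf₁₂ : ∀ a b c, f b a c = -f a b c) (hf₂₃ : ∀ a b c, f a c b = -f a b c)
    (hfinv : ∀ a b c d, ∑ s, (f a b s * f s c d + f a c s * f b s d + f a d s * f b c s) = 0) :
    ∑ a, quadraticElement x f a * quadraticElement x f a
      = (6 : ℝ) • (cubicElement x f * cubicElement x f) := by
  have h3 : ∑ a, x a * quadraticElement x f a = (3 : ℝ) • cubicElement x f := by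
    rw [cubicElement_eq_smul_sum_mul_quadraticElement, smul_smul]; norm_num
  have key : (3 : ℝ) • (cubicElement x f * cubicElement x f)
      = ∑ a, quadraticElement x f a * quadraticElement x f a
        - (3 : ℝ) • (cubicElement x f * cubicElement x f) :=
    calc (3 : ℝ) • (cubicElement x f * cubicElement x f)
        = ∑ a, x a * (quadraticElement x f a * cubicElement x f) := by
          rw [← smul_mul_assoc, ← h3, sum_mul]; simp only [mul_assoc]
      _ = ∑ a, (x a * cubicElement x f) * quadraticElement x f a := by
          simp only [quadraticElement_commute_cubicElement hx hf₂₃ hfinv, mul_assoc]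
      _ = ∑ a, (quadraticElement x f a - cubicElement x f * x a) * quadraticElement x f a := by
          simp only [← x_mul_cubicElement_add hx hf₁₂ hf₂₃, add_sub_cancel_right]
      _ = ∑ a, quadraticElement x f a * quadraticElement x f a
          - (3 : ℝ) • (cubicElement x f * cubicElement x f) := by
          rw [← mul_smul_comm, ← h3, mul_sum]; simp only [sub_mul, sum_sub_distrib, mul_assoc]
  linear_combination (norm := module) (-1 : ℝ) • key

theorem cubicElement_mul_self
    (hx : ∀ a b, x a * x b + x b * x a = if a = b then 1 else 0)
    (hf₁₂ : ∀ a b c, f b a c = -f a b c) (hf₂₃ : ∀ a b c, f a c b = -f a b c)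
    (hfinv : ∀ a b c d, ∑ s, (f a b s * f s c d + f a c s * f b s d + f a d s * f b c s) = 0) :
    cubicElement x f * cubicElement x f
      = (-(1 / 48) * ∑ a, ∑ b, ∑ c, f a b c ^ 2) • (1 : A) := by
  have hS : ∑ a, ∑ b, ∑ c, f a b c • (x a * x b * x c) = (-6 : ℝ) • cubicElement x f := by
    rw [cubicElement, smul_smul]; norm_num
  have hanti := mul_sum_cubic_add x (cubicElement x f) (quadraticElement x f)
    (fun a => by rw [add_comm]; exact x_mul_cubicElement_add hx hf₁₂ hf₂₃ a) f
  simp only [smul_sub, smul_add, sum_sub_distrib, sum_add_distrib,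
    sum_smul_quadraticElement_mul_x_mul_x, sum_smul_x_mul_quadraticElement_mul_x hx hf₁₂ hf₂₃,
    sum_smul_x_mul_x_mul_quadraticElement hf₁₂ hf₂₃,
    sum_quadraticElement_mul_self hx hf₁₂ hf₂₃ hfinv, hS, mul_smul_comm, smul_mul_assoc] at hanti
  linear_combination (norm := module) (1 / 24 : ℝ) • hanti

end CliffordElements

section BilinForm

variable {ι : Type*} [DecidableEq ι] {V : Type*} [AddCommGroup V] [Module ℝ V]
  {ip : LinearMap.BilinForm ℝ V} {e : Module.Basis ι ℝ V}

theorem eq_sum_bilin_smul_of_orthonormal [Fintype ι]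
    (he : ∀ a b, ip (e a) (e b) = if a = b then 1 else 0)
    (v : V) : v = ∑ c, ip v (e c) • e c := by
  have hcoord : ∀ c, ip v (e c) = e.repr v c := by
    intro c
    conv_lhs => rw [← e.sum_repr v]
    simp only [map_sum, map_smul, LinearMap.sum_apply, LinearMap.smul_apply, he, smul_eq_mul,
      mul_ite, mul_one, mul_zero, sum_ite_eq', mem_univ, if_true]
  conv_lhs => rw [← e.sum_repr v]
  simp only [hcoord]

theorem ι_mul_ι_add_swap_of_orthonormal {Q : QuadraticForm ℝ V}
    (hQ : ∀ v, Q v = 1 / 2 * ip v v)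
    (ip_symm : ∀ v w, ip v w = ip w v) (he : ∀ a b, ip (e a) (e b) = if a = b then 1 else 0)
    (a b : ι) :
    CliffordAlgebra.ι Q (e a) * CliffordAlgebra.ι Q (e b)
        + CliffordAlgebra.ι Q (e b) * CliffordAlgebra.ι Q (e a)
      = if a = b then 1 else 0 := by
  have hpolar : QuadraticMap.polar Q (e a) (e b) = ip (e a) (e b) := by
    simp only [QuadraticMap.polar, hQ, map_add, LinearMap.add_apply, ip_symm (e b) (e a)]
    ring
  rw [CliffordAlgebra.ι_mul_ι_add_swap, hpolar, he]
  split_ifs <;> simp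

end BilinForm

section LieAlgebra

variable {ι : Type*} {L : Type*} [LieRing L] [LieAlgebra ℝ L] {ip : LinearMap.BilinForm ℝ L}

theorem bilin_lie_lie_add_of_invariant (ip_inv : ∀ u v w : L, ip ⁅u, v⁆ w + ip v ⁅u, w⁆ = 0)
    (u v w z : L) : ip ⁅⁅u, v⁆, w⁆ z + ip ⁅v, ⁅u, w⁆⁆ z + ip ⁅v, w⁆ ⁅u, z⁆ = 0 := by
  rw [← LinearMap.add_apply, ← map_add, ← leibniz_lie, ip_inv]

variable (ip) in
def structureConstants (e : ι → L) (a b c : ι) : ℝ := ip ⁅e a, e b⁆ (e c)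

theorem structureConstants_swap₁₂ {e : ι → L} (a b c : ι) :
    structureConstants ip e b a c = -structureConstants ip e a b c := by
  rw [structureConstants, structureConstants, ← lie_skew, map_neg, LinearMap.neg_apply]

theorem structureConstants_swap₂₃ {e : ι → L} (ip_symm : ∀ v w, ip v w = ip w v)
    (ip_inv : ∀ u v w : L, ip ⁅u, v⁆ w + ip v ⁅u, w⁆ = 0) (a b c : ι) :
    structureConstants ip e a c b = -structureConstants ip e a b c := by
  rw [structureConstants, structureConstants, ip_symm, eq_neg_iff_add_eq_zero, add_comm, ip_inv]

variable [Fintype ι] [DecidableEq ι] {e : Module.Basis ι ℝ L}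

theorem structureConstants_ad_invariant (he : ∀ a b, ip (e a) (e b) = if a = b then 1 else 0)
    (ip_inv : ∀ u v w : L, ip ⁅u, v⁆ w + ip v ⁅u, w⁆ = 0) (a b c d : ι) :
    ∑ s, (structureConstants ip e a b s * structureConstants ip e s c d
      + structureConstants ip e a c s * structureConstants ip e b s d
      + structureConstants ip e a d s * structureConstants ip e b c s) = 0 := by
  have expand : ∀ u v, ⁅e u, e v⁆ = ∑ s, structureConstants ip e u v s • e s :=
    fun u v => eq_sum_bilin_smul_of_orthonormal he _
  have h := bilin_lie_lie_add_of_invariant ip_inv (e a) (e b) (e c) (e d)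
  rw [expand a b, expand a c, expand a d] at h
  simpa [sum_lie, lie_sum, smul_lie, lie_smul, structureConstants, sum_add_distrib, mul_comm]
    using h

end LieAlgebra

/-- In the Clifford algebra `Cl(𝔤)` of a real Lie algebra `𝔤` with
ad-invariant inner product and orthonormal basis `e`, the cubic element
`γ = -(1/6) ∑ f_{abc} x_a x_b x_c` squares to the scalar `-(1/48) ∑ f_{abc}²`. -/
theorem gamma_sq_scalar
    {n : ℕ} {g : Type*} [LieRing g] [LieAlgebra ℝ g]
    -- the ad-invariant inner product, as a symmetric bilinear form
    (ip : LinearMap.BilinForm ℝ g)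
    (ip_symm : ∀ v w : g, ip v w = ip w v)
    (ip_inv : ∀ v w z : g, ip ⁅v, w⁆ z + ip w ⁅v, z⁆ = 0)
    -- an orthonormal basis
    (e : Module.Basis (Fin n) ℝ g)
    (he : ∀ a b, ip (e a) (e b) = if a = b then (1 : ℝ) else 0)
    -- the quadratic form Q(v) = ½⟨v,v⟩ and its Clifford algebra
    (Q : QuadraticForm ℝ g)
    (hQ : ∀ v, Q v = (1 / 2 : ℝ) * ip v v)
    -- structure constants
    (f : Fin n → Fin n → Fin n → ℝ)
    (hf : ∀ a b c, f a b c = ip ⁅e a, e b⁆ (e c))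
    -- the Clifford generators
    (x : Fin n → CliffordAlgebra Q)
    (hx : ∀ a, x a = CliffordAlgebra.ι Q (e a))
    -- the element γ
    (γ : CliffordAlgebra Q)
    (hγ : γ = (-(1 / 6 : ℝ)) • ∑ a, ∑ b, ∑ c, f a b c • (x a * x b * x c)) :
    γ * γ = algebraMap ℝ (CliffordAlgebra Q)
      ((-(1 / 48 : ℝ)) * ∑ a, ∑ b, ∑ c, (f a b c) ^ 2) := by
  obtain rfl : f = structureConstants ip e := funext fun a => funext fun b => funext (hf a b)
  obtain rfl : x = fun a => CliffordAlgebra.ι Q (e a) := funext hx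
  subst hγ
  rw [Algebra.algebraMap_eq_smul_one]
  exact cubicElement_mul_self (ι_mul_ι_add_swap_of_orthonormal hQ ip_symm he)
    structureConstants_swap₁₂ (structureConstants_swap₂₃ ip_symm ip_inv)
    (structureConstants_ad_invariant he ip_inv)
end

section
/- In Cl(𝔤), for all indices a,b one has the commutator identity g_a x_b − x_b g_a = Σ_c f_{abc} x_c; that is, the commutator with g_a implements the adjoint action of e_a on the generators of the Clifford algebra. -/
/-!
Since `x_r x_s x_b − x_b x_r x_s = x_r {x_s, x_b} − {x_r, x_b} x_s` and `{x_u, x_v} = δ_{uv}`,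
the commutator of `x_b` with a quadratic monomial `x_r x_s` is `δ_{sb} x_r − δ_{rb} x_s`.
Summing against `f_{ars}` gives `−½ (∑_r f_{arb} x_r − ∑_s f_{abs} x_s)`, and ad-invariance
makes `f_{arb} = −f_{abr}`.
-/

open QuadraticMap

theorem CliffordAlgebra.lie_ι_mul_ι_ι {R M : Type*} [CommRing R] [AddCommGroup M] [Module R M]
    (Q : QuadraticForm R M) (u v w : M) :
    ⁅ι Q u * ι Q v, ι Q w⁆ = polar Q v w • ι Q u - polar Q u w • ι Q v := by
  calc ⁅ι Q u * ι Q v, ι Q w⁆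
      = ι Q u * (ι Q v * ι Q w + ι Q w * ι Q v) - (ι Q u * ι Q w + ι Q w * ι Q u) * ι Q v := by
        rw [Ring.lie_def]; noncomm_ring
    _ = polar Q v w • ι Q u - polar Q u w • ι Q v := by
        rw [ι_mul_ι_add_swap, ι_mul_ι_add_swap, ← Algebra.commutes, ← Algebra.smul_def,
          ← Algebra.smul_def]

theorem polar_eq_of_forall_eq_half_mul {K M : Type*} [Field K] [NeZero (2 : K)]
    [AddCommGroup M] [Module K M] {B : LinearMap.BilinForm K M} (hB : ∀ v w, B v w = B w v)
    {Q : QuadraticForm K M} (hQ : ∀ v, Q v = (1 / 2 : K) * B v v) (v w : M) :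
    polar Q v w = B v w := by
  simp only [polar, hQ, map_add, LinearMap.add_apply, hB w v]
  field_simp
  ring

theorem LinearMap.BilinForm.apply_lie_swap {R L : Type*} [CommRing R] [LieRing L]
    [LieAlgebra R L] {B : LinearMap.BilinForm R L} (hB : ∀ v w, B v w = B w v)
    (hinv : ∀ u v w : L, B ⁅u, v⁆ w + B v ⁅u, w⁆ = 0) (u v w : L) :
    B ⁅u, v⁆ w = -B ⁅u, w⁆ v := by
  rw [← hB v]
  exact eq_neg_of_add_eq_zero_left (hinv u v w)

/-- In `Cl(𝔤)`, the commutator with `g_a` implements the adjoint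
action of `e_a` on the Clifford generators: `g_a x_b − x_b g_a = ∑_c f_{abc} x_c`. -/
theorem gCl_commutator_generator
    {n : ℕ} {g : Type*} [LieRing g] [LieAlgebra ℝ g]
    -- the ad-invariant inner product, as a symmetric bilinear form
    (ip : LinearMap.BilinForm ℝ g)
    (ip_symm : ∀ v w : g, ip v w = ip w v)
    (ip_inv : ∀ v w z : g, ip ⁅v, w⁆ z + ip w ⁅v, z⁆ = 0)
    -- an orthonormal basis
    (e : Module.Basis (Fin n) ℝ g)
    (he : ∀ a b, ip (e a) (e b) = if a = b then (1 : ℝ) else 0)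
    -- the quadratic form Q(v) = ½⟨v,v⟩ and its Clifford algebra
    (Q : QuadraticForm ℝ g)
    (hQ : ∀ v, Q v = (1 / 2 : ℝ) * ip v v)
    -- structure constants
    (f : Fin n → Fin n → Fin n → ℝ)
    (hf : ∀ a b c, f a b c = ip ⁅e a, e b⁆ (e c))
    -- the Clifford generators
    (x : Fin n → CliffordAlgebra Q)
    (hx : ∀ a, x a = CliffordAlgebra.ι Q (e a))
    -- the elements g_a = -½ ∑ f_{ars} x_r x_s
    (gc : Fin n → CliffordAlgebra Q)
    (hgc : ∀ a, gc a = (-(1 / 2 : ℝ)) • ∑ r, ∑ s, f a r s • (x r * x s))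
    :
    ∀ a b, gc a * x b - x b * gc a = ∑ c, f a b c • x c := by
  intro a b
  have lie_monomial : ∀ r s, ⁅x r * x s, x b⁆
      = (if s = b then (1 : ℝ) else 0) • x r - (if r = b then (1 : ℝ) else 0) • x s := by
    intro r s
    simp only [hx, CliffordAlgebra.lie_ι_mul_ι_ι,
      polar_eq_of_forall_eq_half_mul ip_symm hQ, he]
  have f_swap : ∀ c, f a c b = -f a b c := fun c => by
    simp only [hf, LinearMap.BilinForm.apply_lie_swap ip_symm ip_inv (e a) (e c)]
  calc gc a * x b - x b * gc a = ⁅gc a, x b⁆ := (Ring.lie_def _ _).symm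
    _ = (-(1 / 2 : ℝ)) • ∑ r, ∑ s, f a r s • ⁅x r * x s, x b⁆ := by
        simp only [hgc, Ring.lie_def, Finset.sum_mul, Finset.mul_sum, smul_mul_assoc,
          mul_smul_comm, ← Finset.sum_sub_distrib, ← smul_sub]
    _ = (-(1 / 2 : ℝ)) • (∑ r, f a r b • x r - ∑ s, f a b s • x s) := by
        simp [lie_monomial, smul_sub, Finset.sum_sub_distrib, smul_ite]
    _ = ∑ c, f a b c • x c := by
        simp only [f_swap, neg_smul, Finset.sum_neg_distrib]
        module
end

section
/- In Cl(𝔤), for every index a one has the anticommutator identity x_a γ + γ x_a = g_a (i.e. the contraction ι_a = ad(x_a), acting on the odd element γ, yields g_a). -/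
/-!
Anticommuting a generator past a product of three generators acts as a graded derivation: each
Clifford relation `x_d x_r + x_r x_d = δ_dr` removes one factor, with alternating signs. Contracting
`f_abc` against the three resulting Kronecker deltas gives `f_drs - f_rds + f_rsd = 3 f_drs`, by
antisymmetry and by the cyclicity of the structure constants that ad-invariance provides; hence the
anticommutator is `-(1/6) · 3 · ∑ f_drs x_r x_s = g_d`.
-/

open Finset

theorem CliffordAlgebra.ι_mul_ι_mul_ι_mul_ι_add_swap {R M : Type*} [CommRing R] [AddCommGroup M]
    [Module R M] (Q : QuadraticForm R M) (u v w z : M) :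
    ι Q u * (ι Q v * ι Q w * ι Q z) + ι Q v * ι Q w * ι Q z * ι Q u
      = QuadraticMap.polar Q u v • (ι Q w * ι Q z) - QuadraticMap.polar Q u w • (ι Q v * ι Q z)
        + QuadraticMap.polar Q u z • (ι Q v * ι Q w) := by
  have expand : ∀ a b c d : CliffordAlgebra Q, a * (b * c * d) + b * c * d * a
      = (a * b + b * a) * c * d - b * (a * c + c * a) * d + b * c * (a * d + d * a) := by
    intros; noncomm_ring
  simp only [expand, ι_mul_ι_add_swap, Algebra.algebraMap_eq_smul_one, smul_mul_assoc,
    mul_smul_comm, one_mul, mul_one]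

theorem sum_smul_kronecker_contraction {ι R M : Type*} [Fintype ι] [DecidableEq ι] [Ring R]
    [AddCommGroup M] [Module R M] (F : ι → ι → ι → R) (y : ι → ι → M) (d : ι) :
    ∑ a, ∑ b, ∑ c, F a b c • ((if d = a then 1 else 0 : R) • y b c
        - (if d = b then 1 else 0 : R) • y a c + (if d = c then 1 else 0 : R) • y a b)
      = ∑ r, ∑ s, (F d r s - F r d s + F r s d) • y r s := by
  simp [smul_add, smul_sub, sum_add_distrib, sum_sub_distrib, add_smul, sub_smul]

theorem LinearMap.BilinForm.apply_lie_cyclic {L R : Type*} [CommRing R] [LieRing L]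
    [LieAlgebra R L] (B : LinearMap.BilinForm R L) (hB : ∀ u v : L, B u v = B v u)
    (hinv : ∀ u v w : L, B ⁅u, v⁆ w + B v ⁅u, w⁆ = 0) (u v w : L) :
    B ⁅u, v⁆ w = B ⁅w, u⁆ v := by
  rw [← lie_skew w u, map_neg, LinearMap.neg_apply, ← hB v, eq_neg_iff_add_eq_zero, hinv]

theorem QuadraticMap.polar_eq_of_eq_half_mul_self {K M : Type*} [Field K] [NeZero (2 : K)]
    [AddCommGroup M] [Module K M] {Q : QuadraticForm K M} {B : LinearMap.BilinForm K M}
    (hB : ∀ v w : M, B v w = B w v) (hQ : ∀ v, Q v = 1 / 2 * B v v) (v w : M) :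
    polar Q v w = B v w := by
  simp only [polar, hQ, map_add, LinearMap.add_apply, hB w v]
  field_simp
  ring

/-- In `Cl(𝔤)`, the anticommutator of a generator with
`γ = -(1/6) ∑ f_{abc} x_a x_b x_c` is `g_a`: `x_a γ + γ x_a = g_a`. -/
theorem anticommutator_x_gamma
    {n : ℕ} {g : Type*} [LieRing g] [LieAlgebra ℝ g]
    -- the ad-invariant inner product, as a symmetric bilinear form
    (ip : LinearMap.BilinForm ℝ g)
    (ip_symm : ∀ v w : g, ip v w = ip w v)
    (ip_inv : ∀ v w z : g, ip ⁅v, w⁆ z + ip w ⁅v, z⁆ = 0)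
    -- an orthonormal basis
    (e : Module.Basis (Fin n) ℝ g)
    (he : ∀ a b, ip (e a) (e b) = if a = b then (1 : ℝ) else 0)
    -- the quadratic form Q(v) = ½⟨v,v⟩ and its Clifford algebra
    (Q : QuadraticForm ℝ g)
    (hQ : ∀ v, Q v = (1 / 2 : ℝ) * ip v v)
    -- structure constants
    (f : Fin n → Fin n → Fin n → ℝ)
    (hf : ∀ a b c, f a b c = ip ⁅e a, e b⁆ (e c))
    -- the Clifford generators
    (x : Fin n → CliffordAlgebra Q)
    (hx : ∀ a, x a = CliffordAlgebra.ι Q (e a))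
    -- the elements g_a = -½ ∑ f_{ars} x_r x_s
    (gc : Fin n → CliffordAlgebra Q)
    (hgc : ∀ a, gc a = (-(1 / 2 : ℝ)) • ∑ r, ∑ s, f a r s • (x r * x s))
    -- the element γ
    (γ : CliffordAlgebra Q)
    (hγ : γ = (-(1 / 6 : ℝ)) • ∑ a, ∑ b, ∑ c, f a b c • (x a * x b * x c)) :
    ∀ a, x a * γ + γ * x a = gc a := by
  intro d
  have hpolar (a b : Fin n) : QuadraticMap.polar Q (e a) (e b) = if a = b then 1 else 0 := by
    rw [QuadraticMap.polar_eq_of_eq_half_mul_self ip_symm hQ, he]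
  have hf_contract (r s : Fin n) : f d r s - f r d s + f r s d = 3 * f d r s := by
    rw [hf, hf, hf, ← lie_skew (e r), map_neg, LinearMap.neg_apply,
      LinearMap.BilinForm.apply_lie_cyclic ip ip_symm ip_inv (e r)]
    ring
  have hanticomm : x d * γ + γ * x d
      = (-(1 / 6 : ℝ)) • ∑ a, ∑ b, ∑ c,
          f a b c • (x d * (x a * x b * x c) + x a * x b * x c * x d) := by
    simp only [hγ, mul_smul_comm, smul_mul_assoc, mul_sum, sum_mul, ← smul_add,
      ← sum_add_distrib]
  rw [hanticomm, hgc]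
  simp only [hx, CliffordAlgebra.ι_mul_ι_mul_ι_mul_ι_add_swap, hpolar]
  rw [sum_smul_kronecker_contraction]
  simp only [hf_contract, mul_smul, ← smul_sum]
  rw [smul_smul]
  norm_num
end

section
/- In Cl(𝔤), the element γ is invariant: for every index a one has g_a γ = γ g_a. -/
/-!
Commutation with `g_a` is a derivation of `Cl(𝔤)`, and by ad-invariance of `⟨·,·⟩` it acts on
generators as `ι ∘ ad e_a`. Write `γ = -⅙ ∑_{p,q} x_p x_q ι⁅e_p, e_q⁆`. Since `ad e_a` is skew, it
can be moved from one factor of the invariant tensor `∑_p e_p ⊗ e_p` to the other, so the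
derivation sends `γ` to `-⅙ ∑_{p,q} x_p x_q ι(⁅e_a, ⁅e_p, e_q⁆⁆ - ⁅⁅e_a, e_p⁆, e_q⁆ - ⁅e_p, ⁅e_a, e_q⁆⁆)`,
which vanishes by the Jacobi identity.
-/

open Finset CliffordAlgebra

section Orthonormal

variable {R L M κ : Type*} [CommRing R] [AddCommGroup L] [Module R L] [AddCommGroup M]
  [Module R M] [Fintype κ] [DecidableEq κ] {B : LinearMap.BilinForm R L} {b : Module.Basis κ R L}

theorem Module.Basis.sum_bilin_smul_apply_of_orthonormal
    (hb : ∀ i j, B (b i) (b j) = if i = j then 1 else 0) (φ : L →ₗ[R] M) (v : L) :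
    ∑ i, B v (b i) • φ (b i) = φ v := by
  conv_rhs => rw [← b.sum_repr v]
  simp only [map_sum, map_smul]
  refine sum_congr rfl fun i _ => ?_
  congr 1
  conv_lhs => rw [← b.sum_repr v]
  simp only [map_sum, map_smul, LinearMap.sum_apply, LinearMap.smul_apply, hb, smul_eq_mul,
    mul_ite, mul_one, mul_zero, sum_ite_eq', mem_univ, if_true]

theorem Module.Basis.sum_apply_skew_left_of_orthonormal (hB : ∀ u v, B u v = B v u)
    (hb : ∀ i j, B (b i) (b j) = if i = j then 1 else 0) {A : L → L}
    (hA : ∀ u v, B (A u) v = -B u (A v)) (F : L →ₗ[R] L →ₗ[R] M) :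
    ∑ i, F (A (b i)) (b i) = -∑ i, F (b i) (A (b i)) := by
  calc ∑ i, F (A (b i)) (b i) = ∑ i, ∑ j, B (A (b i)) (b j) • F (b j) (b i) := by
        refine sum_congr rfl fun i _ => ?_
        exact (b.sum_bilin_smul_apply_of_orthonormal hb (F.flip (b i)) _).symm
    _ = ∑ j, ∑ i, -(B (A (b j)) (b i) • F (b j) (b i)) := by
        rw [sum_comm]
        refine sum_congr rfl fun j _ => sum_congr rfl fun i _ => ?_
        rw [hA, hB (b i), neg_smul]
    _ = -∑ j, F (b j) (A (b j)) := by
        simp only [sum_neg_distrib, b.sum_bilin_smul_apply_of_orthonormal hb]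

end Orthonormal

section Clifford

variable {R L κ : Type*} [CommRing R] [LieRing L] [LieAlgebra R L] [Fintype κ]

/-- `g_a = -½ adBivector Q e (e a)`. -/
noncomputable def adBivector (Q : QuadraticForm R L) (b : Module.Basis κ R L) (w : L) :
    CliffordAlgebra Q :=
  ∑ i, ι Q (b i) * ι Q ⁅w, b i⁆

/-- `γ = -⅙ structureTrivector Q e`. -/
noncomputable def structureTrivector (Q : QuadraticForm R L) (b : Module.Basis κ R L) :
    CliffordAlgebra Q :=
  ∑ i, ∑ j, ι Q (b i) * ι Q (b j) * ι Q ⁅b i, b j⁆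

variable [DecidableEq κ] {Q : QuadraticForm R L} {B : LinearMap.BilinForm R L}
  {b : Module.Basis κ R L}

theorem adBivector_mul_ι_sub_ι_mul_adBivector (hB : ∀ u v, B u v = B v u)
    (hB_inv : ∀ u v w : L, B ⁅u, v⁆ w + B v ⁅u, w⁆ = 0)
    (hb : ∀ i j, B (b i) (b j) = if i = j then 1 else 0)
    (hQ : ∀ u v, QuadraticMap.polar Q u v = B u v) (w v : L) :
    adBivector Q b w * ι Q v - ι Q v * adBivector Q b w = (-2 : R) • ι Q ⁅w, v⁆ := by
  have hι : ∀ u u', ι Q u * ι Q u' + ι Q u' * ι Q u = B u u' • (1 : CliffordAlgebra Q) := by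
    intro u u'
    rw [ι_mul_ι_add_swap, hQ, Algebra.algebraMap_eq_smul_one]
  have hterm : ∀ i, ι Q (b i) * ι Q ⁅w, b i⁆ * ι Q v - ι Q v * (ι Q (b i) * ι Q ⁅w, b i⁆)
      = -(B ⁅w, v⁆ (b i) • ι Q (b i)) - B v (b i) • ι Q ⁅w, b i⁆ := by
    intro i
    have h := hB_inv w (b i) v
    calc _ = ι Q (b i) * (ι Q ⁅w, b i⁆ * ι Q v + ι Q v * ι Q ⁅w, b i⁆)
          - (ι Q (b i) * ι Q v + ι Q v * ι Q (b i)) * ι Q ⁅w, b i⁆ := by noncomm_ring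
      _ = _ := by
        rw [hι, hι, mul_smul_comm, smul_mul_assoc, mul_one, one_mul, hB ⁅w, v⁆,
          eq_neg_of_add_eq_zero_left h, neg_smul, hB (b i) v]
  have hsum : ∑ i, B v (b i) • ι Q ⁅w, b i⁆ = ι Q ⁅w, v⁆ :=
    b.sum_bilin_smul_apply_of_orthonormal hb ((ι Q).comp (LieModule.toEnd R L L w)) v
  rw [adBivector, sum_mul, mul_sum, ← sum_sub_distrib]
  simp only [hterm, sum_sub_distrib, sum_neg_distrib, hsum,
    b.sum_bilin_smul_apply_of_orthonormal hb (ι Q)]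
  module


theorem commute_structureTrivector (hB : ∀ u v, B u v = B v u)
    (hB_inv : ∀ u v w : L, B ⁅u, v⁆ w + B v ⁅u, w⁆ = 0)
    (hb : ∀ i j, B (b i) (b j) = if i = j then 1 else 0) {Y : CliffordAlgebra Q} {w : L}
    (hY : ∀ v, Y * ι Q v - ι Q v * Y = ι Q ⁅w, v⁆) :
    Commute Y (structureTrivector Q b) := by
  have hskew : ∀ u v, B ⁅w, u⁆ v = -B u ⁅w, v⁆ := fun u v =>
    eq_neg_of_add_eq_zero_left (hB_inv w u v)
  have hprod : ∀ u₁ u₂ u₃, Y * (ι Q u₁ * ι Q u₂ * ι Q u₃) - ι Q u₁ * ι Q u₂ * ι Q u₃ * Y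
      = ι Q ⁅w, u₁⁆ * ι Q u₂ * ι Q u₃ + ι Q u₁ * ι Q ⁅w, u₂⁆ * ι Q u₃
        + ι Q u₁ * ι Q u₂ * ι Q ⁅w, u₃⁆ := by
    intro u₁ u₂ u₃
    rw [← hY, ← hY, ← hY]
    noncomm_ring
  have hfirst : ∀ j, ∑ i, ι Q ⁅w, b i⁆ * ι Q (b j) * ι Q ⁅b i, b j⁆
      = -∑ i, ι Q (b i) * ι Q (b j) * ι Q ⁅⁅w, b i⁆, b j⁆ := fun j =>
    b.sum_apply_skew_left_of_orthonormal hB hb hskew <|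
      LinearMap.mk₂ R (fun u v => ι Q u * ι Q (b j) * ι Q ⁅v, b j⁆)
        (by intros; simp only [map_add, add_mul])
        (by intros; simp only [map_smul, smul_mul_assoc])
        (by intros; simp only [map_add, add_lie, mul_add])
        (by intros; simp only [map_smul, smul_lie, mul_smul_comm])
  have hsecond : ∀ i, ∑ j, ι Q (b i) * ι Q ⁅w, b j⁆ * ι Q ⁅b i, b j⁆
      = -∑ j, ι Q (b i) * ι Q (b j) * ι Q ⁅b i, ⁅w, b j⁆⁆ := fun i =>
    b.sum_apply_skew_left_of_orthonormal hB hb hskew <|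
      LinearMap.mk₂ R (fun u v => ι Q (b i) * ι Q u * ι Q ⁅b i, v⁆)
        (by intros; simp only [map_add, add_mul, mul_add])
        (by intros; simp only [map_smul, smul_mul_assoc, mul_smul_comm])
        (by intros; simp only [map_add, lie_add, mul_add])
        (by intros; simp only [map_smul, lie_smul, mul_smul_comm])
  rw [commute_iff_eq, ← sub_eq_zero, structureTrivector]
  simp only [mul_sum, sum_mul, ← sum_sub_distrib, hprod, sum_add_distrib]
  rw [sum_comm]
  simp only [hfirst, hsecond, sum_neg_distrib]
  rw [sum_comm, ← sum_neg_distrib, ← sum_neg_distrib, ← sum_add_distrib, ← sum_add_distrib]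
  refine sum_eq_zero fun i _ => ?_
  rw [← sum_neg_distrib, ← sum_neg_distrib, ← sum_add_distrib, ← sum_add_distrib]
  refine sum_eq_zero fun j _ => ?_
  rw [leibniz_lie w (b i) (b j), map_add, mul_add]
  abel

end Clifford

/-- In `Cl(𝔤)`, the element `γ` is invariant: `g_a γ = γ g_a` for all `a`. -/
theorem gamma_invariant
    {n : ℕ} {g : Type*} [LieRing g] [LieAlgebra ℝ g]
    -- the ad-invariant inner product, as a symmetric bilinear form
    (ip : LinearMap.BilinForm ℝ g)
    (ip_symm : ∀ v w : g, ip v w = ip w v)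
    (ip_inv : ∀ v w z : g, ip ⁅v, w⁆ z + ip w ⁅v, z⁆ = 0)
    -- an orthonormal basis
    (e : Module.Basis (Fin n) ℝ g)
    (he : ∀ a b, ip (e a) (e b) = if a = b then (1 : ℝ) else 0)
    -- the quadratic form Q(v) = ½⟨v,v⟩ and its Clifford algebra
    (Q : QuadraticForm ℝ g)
    (hQ : ∀ v, Q v = (1 / 2 : ℝ) * ip v v)
    -- structure constants
    (f : Fin n → Fin n → Fin n → ℝ)
    (hf : ∀ a b c, f a b c = ip ⁅e a, e b⁆ (e c))
    -- the Clifford generators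
    (x : Fin n → CliffordAlgebra Q)
    (hx : ∀ a, x a = CliffordAlgebra.ι Q (e a))
    -- the elements g_a = -½ ∑ f_{ars} x_r x_s
    (gc : Fin n → CliffordAlgebra Q)
    (hgc : ∀ a, gc a = (-(1 / 2 : ℝ)) • ∑ r, ∑ s, f a r s • (x r * x s))
    -- the element γ
    (γ : CliffordAlgebra Q)
    (hγ : γ = (-(1 / 6 : ℝ)) • ∑ a, ∑ b, ∑ c, f a b c • (x a * x b * x c)) :
    ∀ a, gc a * γ = γ * gc a := by
  intro a
  have hpolar : ∀ u v, QuadraticMap.polar Q u v = ip u v := by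
    intro u v
    simp only [QuadraticMap.polar, hQ, map_add, LinearMap.add_apply, ip_symm v u]
    ring
  have hstruct : ∀ p q, ∑ c, f p q c • ι Q (e c) = ι Q ⁅e p, e q⁆ := by
    simpa only [hf] using fun p q => e.sum_bilin_smul_apply_of_orthonormal he (ι Q) _
  have hgc' : gc a = (-(1 / 2 : ℝ)) • adBivector Q e (e a) := by
    simp only [hgc, adBivector, ← mul_smul_comm, ← mul_sum, hstruct, hx]
  have hγ' : γ = (-(1 / 6 : ℝ)) • structureTrivector Q e := by
    simp only [hγ, structureTrivector, ← mul_smul_comm, ← mul_sum, hstruct, hx]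
  have hcomm : ∀ v, gc a * ι Q v - ι Q v * gc a = ι Q ⁅e a, v⁆ := by
    intro v
    rw [hgc', smul_mul_assoc, mul_smul_comm, ← smul_sub,
      adBivector_mul_ι_sub_ι_mul_adBivector ip_symm ip_inv he hpolar, smul_smul]
    norm_num
  rw [hγ']
  exact ((commute_structureTrivector ip_symm ip_inv he hcomm).smul_right _).eq
end

section
/- In 𝒲 = U(𝔤) ⊗ Cl(𝔤), the element 𝔇 is invariant: for every index a, (u_a ⊗ 1 + 1 ⊗ g_a)·𝔇 = 𝔇·(u_a ⊗ 1 + 1 ⊗ g_a). -/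
/-! The element `u_a ⊗ 1 + 1 ⊗ g_a` acts by commutators on both tensor factors through the
skew-adjoint derivation `D = ad e_a`: on `U(𝔤)` because `ι` is a Lie algebra map, on `Cl(𝔤)`
because `g_a = -½ ∑ᵢ xᵢ ι(D eᵢ)` satisfies `⁅g_a, ι w⁆ = ι (D w)`. Invariance of `𝔇` then
reduces to the invariance of the Casimir tensor `∑ᵢ eᵢ ⊗ eᵢ` under skew-adjoint maps: once for
`∑ᵢ uᵢ ⊗ xᵢ`, and once in each slot for `γ = -⅙ ∑ᵢⱼ xᵢ xⱼ ι⁅eᵢ, eⱼ⁆`, where `D` being a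
derivation of the bracket handles the third factor. -/

open scoped TensorProduct

section

attribute [local instance] LieRing.ofAssociativeRing

section BilinForm

variable {R V κ : Type*} [CommRing R] [AddCommGroup V] [Module R V] [Fintype κ]

theorem Module.Basis.sum_smul_eq_self_of_orthonormal [DecidableEq κ]
    {B : LinearMap.BilinForm R V} (e : Module.Basis κ R V)
    (he : ∀ i j, B (e i) (e j) = if i = j then 1 else 0) (v : V) :
    ∑ i, B v (e i) • e i = v := by
  have hcoord : ∀ i, e.coord i = B.flip (e i) := fun i =>
    e.ext fun j => by simp [he, Finsupp.single_apply, eq_comm]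
  conv_rhs => rw [← e.sum_repr v]
  simp [← Module.Basis.coord_apply, hcoord]

theorem LinearMap.BilinForm.sum_apply_skew_add_eq_zero {N : Type*} [AddCommGroup N] [Module R N]
    {B : LinearMap.BilinForm R V} (hB : B.IsSymm) {e : κ → V}
    (he : ∀ v, ∑ i, B v (e i) • e i = v) {D : V →ₗ[R] V} (hD : LinearMap.IsSkewAdjoint B D)
    (β : V →ₗ[R] V →ₗ[R] N) :
    ∑ i, (β (D (e i)) (e i) + β (e i) (D (e i))) = 0 := by
  have key : ∑ i, β (e i) (D (e i)) = -∑ j, β (D (e j)) (e j) := calc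
    ∑ i, β (e i) (D (e i)) = ∑ i, ∑ j, B (D (e i)) (e j) • β (e i) (e j) := by
      refine Finset.sum_congr rfl fun i _ => ?_
      conv_lhs => rw [← he (D (e i))]
      simp
    _ = ∑ j, ∑ i, -(B (D (e j)) (e i) • β (e i) (e j)) := by
      rw [Finset.sum_comm]
      refine Finset.sum_congr rfl fun j _ => Finset.sum_congr rfl fun i _ => ?_
      rw [hD, hB.eq (e i), ← neg_smul]
      simp
    _ = -∑ j, β (D (e j)) (e j) := by
      simp_rw [Finset.sum_neg_distrib]
      congr 1
      refine Finset.sum_congr rfl fun j _ => ?_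
      conv_rhs => rw [← he (D (e j))]
      simp
  rw [Finset.sum_add_distrib, key, add_neg_cancel]

theorem LinearMap.BilinForm.lieInvariant.isSkewAdjoint_ad {L : Type*} [LieRing L]
    [LieAlgebra R L] {B : LinearMap.BilinForm R L} (hB : B.lieInvariant L) (v : L) :
    LinearMap.IsSkewAdjoint B (LieAlgebra.ad R L v) := fun w z => by
  rw [Pi.neg_apply, map_neg, LieAlgebra.ad_apply, LieAlgebra.ad_apply, hB]

end BilinForm

namespace CliffordAlgebra

variable {R M : Type*} [CommRing R] [AddCommGroup M] [Module R M] {Q : QuadraticForm R M}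

theorem lie_ι_mul_ι_ι_s8 (v w z : M) :
    ⁅ι Q v * ι Q w, ι Q z⁆
      = QuadraticMap.polar Q w z • ι Q v - QuadraticMap.polar Q v z • ι Q w := by
  rw [Ring.lie_def, mul_assoc, ι_mul_ι_comm w z, mul_sub, ← mul_assoc, ι_mul_ι_comm v z, sub_mul]
  simp only [← Algebra.commutes, ← Algebra.smul_def, mul_assoc]
  abel

theorem lie_sum_ι_mul_ι_ι {κ : Type*} [Fintype κ] {e : κ → M}
    (he : ∀ v, ∑ i, Q.polarBilin v (e i) • e i = v) {D : M →ₗ[R] M}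
    (hD : LinearMap.IsSkewAdjoint Q.polarBilin D) (w : M) :
    ⁅∑ i, ι Q (e i) * ι Q (D (e i)), ι Q w⁆ = (-2 : R) • ι Q (D w) := by
  have h₁ : ∑ i, Q.polarBilin (D (e i)) w • ι Q (e i) = -ι Q (D w) := by
    conv_rhs => rw [← he (D w), map_sum, ← Finset.sum_neg_distrib]
    refine Finset.sum_congr rfl fun i _ => ?_
    rw [hD, map_smul, ← neg_smul, Pi.neg_apply, map_neg, QuadraticMap.polarBilin_apply_apply,
      QuadraticMap.polarBilin_apply_apply, QuadraticMap.polar_comm]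
  have h₂ : ∑ i, Q.polarBilin (e i) w • ι Q (D (e i)) = ι Q (D w) := by
    conv_rhs => rw [← he w]
    simp [QuadraticMap.polar_comm Q w]
  simp only [sum_lie, lie_ι_mul_ι_ι_s8, Finset.sum_sub_distrib]
  simp only [QuadraticMap.polarBilin_apply_apply] at h₁ h₂
  rw [h₁, h₂]
  module

end CliffordAlgebra

theorem Ring.lie_mul {A : Type*} [Ring A] (a b c : A) : ⁅a, b * c⁆ = ⁅a, b⁆ * c + b * ⁅a, c⁆ := by
  simp only [Ring.lie_def]
  noncomm_ring

theorem Algebra.TensorProduct.lie_tmul_one_add_one_tmul {R A C : Type*} [CommRing R] [Ring A]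
    [Algebra R A] [Ring C] [Algebra R C] (p a : A) (q c : C) :
    ⁅p ⊗ₜ[R] (1 : C) + (1 : A) ⊗ₜ[R] q, a ⊗ₜ[R] c⁆ = ⁅p, a⁆ ⊗ₜ[R] c + a ⊗ₜ[R] ⁅q, c⁆ := by
  simp only [Ring.lie_def, add_mul, mul_add, tmul_mul_tmul, one_mul, mul_one,
    TensorProduct.sub_tmul, TensorProduct.tmul_sub]
  abel

section Invariance

variable {R κ : Type*} [CommRing R] [Fintype κ]

theorem commute_tmul_one_add_one_tmul_sum {V A C : Type*} [AddCommGroup V] [Module R V] [Ring A]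
    [Algebra R A] [Ring C] [Algebra R C] {B : LinearMap.BilinForm R V} {e : κ → V}
    {D : V →ₗ[R] V} (hB : B.IsSymm) (he : ∀ v, ∑ i, B v (e i) • e i = v)
    (hD : LinearMap.IsSkewAdjoint B D) (φ : V →ₗ[R] A) (ψ : V →ₗ[R] C) {p : A} {q : C}
    (hp : ∀ w, ⁅p, φ w⁆ = φ (D w)) (hq : ∀ w, ⁅q, ψ w⁆ = ψ (D w)) :
    Commute (p ⊗ₜ[R] (1 : C) + (1 : A) ⊗ₜ[R] q) (∑ i, φ (e i) ⊗ₜ[R] ψ (e i)) := by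
  rw [commute_iff_lie_eq, lie_sum]
  simp_rw [Algebra.TensorProduct.lie_tmul_one_add_one_tmul, hp, hq]
  simpa using LinearMap.BilinForm.sum_apply_skew_add_eq_zero hB he hD
    ((TensorProduct.mk R A C).compl₁₂ φ ψ)

theorem commute_sum_mul_mul_lie {L A : Type*} [LieRing L] [LieAlgebra R L] [Ring A] [Algebra R A]
    {B : LinearMap.BilinForm R L} {e : κ → L} {D : L →ₗ[R] L} (hB : B.IsSymm)
    (he : ∀ v, ∑ i, B v (e i) • e i = v) (hD : LinearMap.IsSkewAdjoint B D)
    (hder : ∀ v w, D ⁅v, w⁆ = ⁅D v, w⁆ + ⁅v, D w⁆) (φ : L →ₗ[R] A) {z : A}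
    (hz : ∀ w, ⁅z, φ w⁆ = φ (D w)) :
    Commute z (∑ i, ∑ j, φ (e i) * φ (e j) * φ ⁅e i, e j⁆) := by
  have hleft : ∀ j, ∑ i, (φ (D (e i)) * φ (e j) * φ ⁅e i, e j⁆
      + φ (e i) * φ (e j) * φ ⁅D (e i), e j⁆) = 0 := fun j =>
    LinearMap.BilinForm.sum_apply_skew_add_eq_zero hB he hD <|
      LinearMap.mk₂ R (fun w w' => φ w * φ (e j) * φ ⁅w', e j⁆)
        (by intros; simp [add_mul]) (by intros; simp) (by intros; simp [add_lie, mul_add])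
        (by intros; simp)
  have hright : ∀ i, ∑ j, (φ (e i) * φ (D (e j)) * φ ⁅e i, e j⁆
      + φ (e i) * φ (e j) * φ ⁅e i, D (e j)⁆) = 0 := fun i =>
    LinearMap.BilinForm.sum_apply_skew_add_eq_zero hB he hD <|
      LinearMap.mk₂ R (fun w w' => φ (e i) * φ w * φ ⁅e i, w'⁆)
        (by intros; simp [add_mul, mul_add]) (by intros; simp) (by intros; simp [mul_add])
        (by intros; simp)
  rw [commute_iff_lie_eq]
  calc ⁅z, ∑ i, ∑ j, φ (e i) * φ (e j) * φ ⁅e i, e j⁆⁆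
      = ∑ i, ∑ j, (φ (D (e i)) * φ (e j) * φ ⁅e i, e j⁆
          + φ (e i) * φ (e j) * φ ⁅D (e i), e j⁆)
        + ∑ i, ∑ j, (φ (e i) * φ (D (e j)) * φ ⁅e i, e j⁆
          + φ (e i) * φ (e j) * φ ⁅e i, D (e j)⁆) := by
        simp_rw [lie_sum, ← Finset.sum_add_distrib, Ring.lie_mul, hz, hder, map_add]
        refine Finset.sum_congr rfl fun i _ => Finset.sum_congr rfl fun j _ => ?_
        noncomm_ring
    _ = 0 := by rw [Finset.sum_comm]; simp [hleft, hright]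

end Invariance

end

/-- In `𝒲 = U(𝔤) ⊗ Cl(𝔤)`, the Dirac element `𝔇` is invariant:
`(u_a ⊗ 1 + 1 ⊗ g_a)·𝔇 = 𝔇·(u_a ⊗ 1 + 1 ⊗ g_a)` for every `a`. -/
theorem dirac_invariant
    {n : ℕ} {g : Type*} [LieRing g] [LieAlgebra ℝ g]
    -- the ad-invariant inner product, as a symmetric bilinear form
    (ip : LinearMap.BilinForm ℝ g)
    (ip_symm : ∀ v w : g, ip v w = ip w v)
    (ip_inv : ∀ v w z : g, ip ⁅v, w⁆ z + ip w ⁅v, z⁆ = 0)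
    -- an orthonormal basis
    (e : Module.Basis (Fin n) ℝ g)
    (he : ∀ a b, ip (e a) (e b) = if a = b then (1 : ℝ) else 0)
    -- the quadratic form Q(v) = ½⟨v,v⟩ and its Clifford algebra
    (Q : QuadraticForm ℝ g)
    (hQ : ∀ v, Q v = (1 / 2 : ℝ) * ip v v)
    -- structure constants
    (f : Fin n → Fin n → Fin n → ℝ)
    (hf : ∀ a b c, f a b c = ip ⁅e a, e b⁆ (e c))
    -- the Clifford generators
    (x : Fin n → CliffordAlgebra Q)
    (hx : ∀ a, x a = CliffordAlgebra.ι Q (e a))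
    -- the elements g_a = -½ ∑ f_{ars} x_r x_s
    (gc : Fin n → CliffordAlgebra Q)
    (hgc : ∀ a, gc a = (-(1 / 2 : ℝ)) • ∑ r, ∑ s, f a r s • (x r * x s))
    -- the element γ
    (γ : CliffordAlgebra Q)
    (hγ : γ = (-(1 / 6 : ℝ)) • ∑ a, ∑ b, ∑ c, f a b c • (x a * x b * x c))
    -- the generators of the universal enveloping algebra
    (u : Fin n → UniversalEnvelopingAlgebra ℝ g)
    (hu : ∀ a, u a = UniversalEnvelopingAlgebra.ι ℝ (e a))
    -- the Dirac element 𝔇 in 𝒲 = U(𝔤) ⊗ Cl(𝔤)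
    (D : UniversalEnvelopingAlgebra ℝ g ⊗[ℝ] CliffordAlgebra Q)
    (hD : D = ∑ a, u a ⊗ₜ[ℝ] x a + 1 ⊗ₜ[ℝ] γ)
    :
    ∀ a, (u a ⊗ₜ[ℝ] (1 : CliffordAlgebra Q) + 1 ⊗ₜ[ℝ] gc a) * D
      = D * (u a ⊗ₜ[ℝ] (1 : CliffordAlgebra Q) + 1 ⊗ₜ[ℝ] gc a) := by
  let _ : LieRing (UniversalEnvelopingAlgebra ℝ g) := LieRing.ofAssociativeRing
  obtain rfl : u = fun b => UniversalEnvelopingAlgebra.ι ℝ (e b) := funext hu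
  obtain rfl : x = fun b => CliffordAlgebra.ι Q (e b) := funext hx
  intro a
  set ad := LieAlgebra.ad ℝ g (e a)
  have hsymm : ip.IsSymm := ⟨ip_symm⟩
  have hexp : ∀ v, ∑ i, ip v (e i) • e i = v := e.sum_smul_eq_self_of_orthonormal he
  have hinv : ip.lieInvariant g := fun v w z => eq_neg_of_add_eq_zero_left (ip_inv v w z)
  have hskew : LinearMap.IsSkewAdjoint ip ad := hinv.isSkewAdjoint_ad (e a)
  have hpolar : Q.polarBilin = ip := LinearMap.ext₂ fun v w => by
    simp [QuadraticMap.polar, hQ, ip_symm w v]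
    ring
  have hι : ∀ v, ∑ c, ip v (e c) • CliffordAlgebra.ι Q (e c) = CliffordAlgebra.ι Q v := fun v => by
    simp_rw [← map_smul, ← map_sum, hexp]
  have hgc' : gc a
      = (-(1 / 2 : ℝ)) • ∑ r, CliffordAlgebra.ι Q (e r) * CliffordAlgebra.ι Q (ad (e r)) := by
    simp_rw [hgc, hf, ← mul_smul_comm, ← Finset.mul_sum, hι]
    rfl
  have hγ' : γ = (-(1 / 6 : ℝ)) • ∑ b, ∑ c,
      CliffordAlgebra.ι Q (e b) * CliffordAlgebra.ι Q (e c) * CliffordAlgebra.ι Q ⁅e b, e c⁆ := by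
    simp_rw [hγ, hf, ← mul_smul_comm, ← Finset.mul_sum, hι]
  have hg : ∀ w, ⁅gc a, CliffordAlgebra.ι Q w⁆ = CliffordAlgebra.ι Q (ad w) := fun w => by
    rw [hgc', Ring.lie_def, smul_mul_assoc, mul_smul_comm, ← smul_sub, ← Ring.lie_def,
      CliffordAlgebra.lie_sum_ι_mul_ι_ι (hpolar ▸ hexp) (hpolar ▸ hskew), smul_smul]
    norm_num
  have hu' : ∀ w, ⁅UniversalEnvelopingAlgebra.ι ℝ (e a), UniversalEnvelopingAlgebra.ι ℝ w⁆
      = UniversalEnvelopingAlgebra.ι ℝ (ad w) := fun w =>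
    ((UniversalEnvelopingAlgebra.ι ℝ).map_lie (e a) w).symm
  rw [hD]
  refine Commute.add_right ?_ ?_
  · exact commute_tmul_one_add_one_tmul_sum hsymm hexp hskew
      (UniversalEnvelopingAlgebra.ι ℝ).toLinearMap (CliffordAlgebra.ι Q) hu' hg
  · rw [commute_iff_lie_eq, Algebra.TensorProduct.lie_tmul_one_add_one_tmul, hγ',
      ((commute_sum_mul_mul_lie hsymm hexp hskew (leibniz_lie (e a)) (CliffordAlgebra.ι Q)
        hg).smul_right _).lie_eq]
    simp [Ring.lie_def]
end

section
/- For every w ∈ Cl(𝔤): σ(γ·w − ε(w)·γ) = −½ Σ_{a,b,c} f_{abc} e_b ∧ e_c ∧ ι_a(σ(w)) − (1/24) Σ_{a,b,c} f_{abc} (ι_a ι_b ι_c)(σ(w)). That is, under the symbol map the super-commutator with γ becomes the Koszul-type operator −½ f_{abc} y_b y_c ι_a − (1/24) f_{abc} ι_a ι_b ι_c on the exterior algebra. -/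
/-!
The symbol map is Mathlib's `CliffordAlgebra.equivExterior`: both send ordered monomials in an
orthonormal basis to the corresponding wedge products. Under it, left multiplication by `x_a`
becomes `λ_a + κ_a` and `w ↦ ε(w) x_a` becomes `λ_a - κ_a`, where `λ_a = e_a ∧ ·` and
`κ_a = ½ ι_a`; the second formula holds because `x_a w - ε(w) x_a` is already, inside `Cl(𝔤)`,
the contraction of `w` by `⟨e_a, ·⟩`. Hence
`σ(γ w - ε(w) γ) = -⅙ ∑ f_{abc} (L_a L_b L_c + M_c M_b M_a) σ(w)` with `L = λ + κ`, `M = λ - κ`.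
Total antisymmetry of `f` turns `M_c M_b M_a` into `-M_a M_b M_c`, so only the monomials odd in
`κ` survive. Since `κ_a` anticommutes with `λ_b` for `a ≠ b`, and `f` vanishes whenever two
indices agree, every `κ` can then be moved to the right of the `λ`s.
-/

open Finset

structure IsTotallyAntisymm {ι R : Type*} [Neg R] (f : ι → ι → ι → R) : Prop where
  swap₁₂ : ∀ a b c, f b a c = -f a b c
  swap₂₃ : ∀ a b c, f a c b = -f a b c

theorem isTotallyAntisymm_structureConstants {R L ι : Type*} [CommRing R] [LieRing L]
    [LieAlgebra R L] (B : LinearMap.BilinForm R L) (hB : ∀ u v : L, B u v = B v u)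
    (hB_inv : ∀ u v w : L, B ⁅u, v⁆ w + B v ⁅u, w⁆ = 0) (e : ι → L) :
    IsTotallyAntisymm fun a b c => B ⁅e a, e b⁆ (e c) where
  swap₁₂ a b c := by rw [← lie_skew, map_neg, LinearMap.neg_apply]
  swap₂₃ a b c := by rw [hB, eq_neg_iff_add_eq_zero, add_comm, hB_inv]

namespace IsTotallyAntisymm

variable {ι R : Type*} [CommRing R] {f : ι → ι → ι → R} (hf : IsTotallyAntisymm f)
include hf

theorem cycle (a b c : ι) : f c a b = f a b c := by
  rw [hf.swap₁₂, hf.swap₂₃, neg_neg]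

theorem swap₁₃ (a b c : ι) : f c b a = -f a b c := by
  rw [hf.swap₂₃, hf.cycle]

theorem apply_self₁₂ [IsAddTorsionFree R] (a c : ι) : f a a c = 0 :=
  self_eq_neg.mp (hf.swap₁₂ a a c)

theorem apply_self₁₃ [IsAddTorsionFree R] (a b : ι) : f a b a = 0 :=
  self_eq_neg.mp (hf.swap₁₃ a b a)

theorem apply_self₂₃ [IsAddTorsionFree R] (a b : ι) : f a b b = 0 :=
  self_eq_neg.mp (hf.swap₂₃ a b b)

variable [Fintype ι] {E : Type*} [AddCommGroup E] [Module R E]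

theorem sum_smul_swap₂₃ (X : ι → ι → ι → E) :
    ∑ a, ∑ b, ∑ c, f a b c • X a c b = -∑ a, ∑ b, ∑ c, f a b c • X a b c := by
  simp only [← sum_neg_distrib, ← neg_smul, ← hf.swap₂₃]
  exact sum_congr rfl fun _ _ => sum_comm

theorem sum_smul_cycle (X : ι → ι → ι → E) :
    ∑ a, ∑ b, ∑ c, f a b c • X c a b = ∑ a, ∑ b, ∑ c, f a b c • X a b c := calc
  _ = ∑ a, ∑ c, ∑ b, f a b c • X c a b := sum_congr rfl fun _ _ => sum_comm
  _ = ∑ c, ∑ a, ∑ b, f a b c • X c a b := sum_comm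
  _ = ∑ c, ∑ a, ∑ b, f c a b • X c a b :=
    sum_congr rfl fun c _ => sum_congr rfl fun a _ => sum_congr rfl fun b _ => by
      rw [hf.cycle a b c]

theorem sum_smul_swap₁₃ (X : ι → ι → ι → E) :
    ∑ a, ∑ b, ∑ c, f a b c • X c b a = -∑ a, ∑ b, ∑ c, f a b c • X a b c :=
  (hf.sum_smul_cycle fun a b c => X a c b).trans (hf.sum_smul_swap₂₃ X)

section Anticommuting

variable [IsAddTorsionFree R] {A : Type*} [Ring A] [Algebra R A] (l k : ι → A)
  (hlk : ∀ a b, a ≠ b → k a * l b = -(l b * k a))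
include hlk

theorem sum_smul_orderings_eq_three_smul :
    ∑ a, ∑ b, ∑ c, f a b c • (l a * l b * k c) + ∑ a, ∑ b, ∑ c, f a b c • (l a * k b * l c)
        + ∑ a, ∑ b, ∑ c, f a b c • (k a * l b * l c)
      = (3 : R) • ∑ a, ∑ b, ∑ c, f a b c • (l b * l c * k a) := by
  have hmid : ∀ a b c, f a b c • (l a * k b * l c) = -(f a b c • (l a * l c * k b)) := by
    intro a b c
    by_cases hbc : b = c
    · subst hbc; simp [hf.apply_self₂₃]
    · rw [mul_assoc, hlk b c hbc, mul_neg, smul_neg, ← mul_assoc]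
  have hleft : ∀ a b c, f a b c • (k a * l b * l c) = f a b c • (l b * l c * k a) := by
    intro a b c
    by_cases hab : a = b
    · subst hab; simp [hf.apply_self₁₂]
    by_cases hac : a = c
    · subst hac; simp [hf.apply_self₁₃]
    rw [hlk a b hab, neg_mul, mul_assoc, hlk a c hac, mul_neg, neg_neg, mul_assoc]
  have hllk : ∑ a, ∑ b, ∑ c, f a b c • (l a * l b * k c)
      = ∑ a, ∑ b, ∑ c, f a b c • (l b * l c * k a) :=
    hf.sum_smul_cycle fun a b c => l b * l c * k a
  have hlkl : ∑ a, ∑ b, ∑ c, f a b c • (l a * k b * l c)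
      = ∑ a, ∑ b, ∑ c, f a b c • (l b * l c * k a) := by
    simp only [hmid, sum_neg_distrib]
    rw [hf.sum_smul_swap₂₃ fun a b c => l a * l b * k c, neg_neg, hllk]
  simp only [hleft, hllk, hlkl]
  module

theorem sum_smul_cube_add_reverse_cube :
    ∑ a, ∑ b, ∑ c, f a b c • ((l a + k a) * (l b + k b) * (l c + k c)
        + (l c - k c) * (l b - k b) * (l a - k a))
      = (6 : R) • ∑ a, ∑ b, ∑ c, f a b c • (l b * l c * k a)
        + (2 : R) • ∑ a, ∑ b, ∑ c, f a b c • (k a * k b * k c) := by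
  have hexpand : ∀ a b c, (l a + k a) * (l b + k b) * (l c + k c)
      - (l a - k a) * (l b - k b) * (l c - k c)
        = (2 : R) • (l a * l b * k c + l a * k b * l c + k a * l b * l c + k a * k b * k c) := by
    intro a b c; rw [two_smul]; noncomm_ring
  calc _ = ∑ a, ∑ b, ∑ c, f a b c • ((l a + k a) * (l b + k b) * (l c + k c))
        - ∑ a, ∑ b, ∑ c, f a b c • ((l a - k a) * (l b - k b) * (l c - k c)) := by
        rw [sub_eq_add_neg,
          ← hf.sum_smul_swap₁₃ fun a b c => (l a - k a) * (l b - k b) * (l c - k c)]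
        simp only [smul_add, sum_add_distrib]
    _ = (2 : R) • ∑ a, ∑ b, ∑ c, f a b c •
          (l a * l b * k c + l a * k b * l c + k a * l b * l c + k a * k b * k c) := by
        simp only [smul_sum, smul_comm (2 : R) (f _ _ _), ← hexpand, smul_sub, sum_sub_distrib]
    _ = _ := by
        simp only [smul_add, sum_add_distrib]
        rw [← smul_add, ← smul_add, hf.sum_smul_orderings_eq_three_smul l k hlk]
        module

end Anticommuting

end IsTotallyAntisymm

theorem QuadraticMap.associated_eq_half_smul_of_apply_eq {K M : Type*} [Field K] [CharZero K]
    [AddCommGroup M] [Module K M] {Q : QuadraticForm K M} {B : LinearMap.BilinForm K M}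
    (hB : ∀ u v, B u v = B v u) (hQ : ∀ v, Q v = (1 / 2 : K) * B v v) :
    Q.associated = (1 / 2 : K) • B := by
  have hpolar : Q.polarBilin = B := by
    ext u v
    simp only [QuadraticMap.polarBilin_apply_apply, QuadraticMap.polar, hQ, map_add,
      LinearMap.add_apply, hB v u]
    ring
  rw [← hpolar, ← QuadraticMap.two_nsmul_associated K, ← Nat.cast_smul_eq_nsmul K, smul_smul]
  norm_num

theorem Module.Basis.exteriorAlgebra_apply_eq_prod {R M I : Type*} [CommRing R]
    [AddCommGroup M] [Module R M] [LinearOrder I] (b : Module.Basis I R M) (s : Finset I) :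
    b.ExteriorAlgebra s = (s.sort.map fun i => ExteriorAlgebra.ι R (b i)).prod := by
  rw [ExteriorAlgebra.basis_apply_ofCard b rfl, ExteriorAlgebra.ιMulti_family,
    ExteriorAlgebra.ιMulti_apply, ← List.ofFn_getElem_eq_map,
    List.ofFn_congr (Finset.length_sort (· ≤ ·) (s := s)).symm]
  rfl

theorem ExteriorAlgebra.eq_contractLeft_of_basis {R M I : Type*} [CommRing R] [AddCommGroup M]
    [Module R M] (b : Module.Basis I R M) (d : Module.Dual R M)
    (D : Module.End R (ExteriorAlgebra R M))
    (hD_ι : ∀ i, D (ι R (b i)) = algebraMap R _ (d (b i)))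
    (hD_mul : ∀ u v, D (u * v) = D u * v + CliffordAlgebra.involute u * D v) :
    D = CliffordAlgebra.contractLeft d := by
  have hι : D ∘ₗ ι R = Algebra.linearMap R _ ∘ₗ d := b.ext hD_ι
  have hone : D 1 = 0 := by simpa using hD_mul 1 1
  refine LinearMap.ext fun x => ?_
  induction x using CliffordAlgebra.left_induction with
  | algebraMap r =>
    rw [CliffordAlgebra.contractLeft_algebraMap, Algebra.algebraMap_eq_smul_one, map_smul, hone,
      smul_zero]
  | add x y hx hy => rw [map_add, map_add, hx, hy]
  | ι_mul x m hx =>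
    rw [hD_mul, CliffordAlgebra.contractLeft_ι_mul, ← hx, CliffordAlgebra.involute_ι,
      ← LinearMap.comp_apply D, hι]
    simp [Algebra.smul_def, sub_eq_add_neg]

namespace CliffordAlgebra

variable {R M : Type*} [CommRing R] [AddCommGroup M] [Module R M] {Q : QuadraticForm R M}

theorem contractLeft_prod_map_ι_eq_zero (d : Module.Dual R M) {l : List M}
    (hl : ∀ m ∈ l, d m = 0) : contractLeft d (l.map (ι Q)).prod = 0 := by
  induction l with
  | nil => exact contractLeft_one Q d
  | cons m l ih =>
    rw [List.map_cons, List.prod_cons, contractLeft_ι_mul, hl m List.mem_cons_self,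
      ih fun m' hm' => hl m' (List.mem_cons_of_mem m hm'), zero_smul, mul_zero, sub_zero]

theorem ι_mul_sub_involute_mul_ι (m : M) (x : CliffordAlgebra Q) :
    ι Q m * x - involute x * ι Q m = contractLeft (Q.polarBilin m) x := by
  induction x using CliffordAlgebra.left_induction with
  | algebraMap r => rw [AlgHom.commutes, Algebra.commutes, sub_self, contractLeft_algebraMap]
  | add x y hx hy => rw [map_add, mul_add, add_mul, map_add, ← hx, ← hy]; abel
  | ι_mul x v hx =>
    rw [contractLeft_ι_mul, ← hx, map_mul, involute_ι, QuadraticMap.polarBilin_apply_apply,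
      Algebra.smul_def, ← ι_mul_ι_add_swap]
    noncomm_ring

theorem map_cubic_mul_sub_involute_mul {V I : Type*} [AddCommGroup V] [Module R V] [Fintype I]
    (σ : CliffordAlgebra Q →ₗ[R] V) (v : I → M) (L N : I → Module.End R V)
    (hL : ∀ a y, σ (ι Q (v a) * y) = L a (σ y))
    (hN : ∀ a y, σ (involute y * ι Q (v a)) = N a (σ y))
    (f : I → I → I → R) (w : CliffordAlgebra Q) :
    σ ((∑ a, ∑ b, ∑ c, f a b c • (ι Q (v a) * ι Q (v b) * ι Q (v c))) * w
        - involute w * ∑ a, ∑ b, ∑ c, f a b c • (ι Q (v a) * ι Q (v b) * ι Q (v c)))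
      = (∑ a, ∑ b, ∑ c, f a b c • (L a * L b * L c + N c * N b * N a)) (σ w) := by
  have hleft : ∀ a b c, σ (ι Q (v a) * ι Q (v b) * ι Q (v c) * w) = (L a * L b * L c) (σ w) := by
    intro a b c
    simp only [mul_assoc, hL, Module.End.mul_apply]
  have hright : ∀ a b c, σ (involute w * (ι Q (v a) * ι Q (v b) * ι Q (v c)))
      = -(N c * N b * N a) (σ w) := by
    intro a b c
    have h₁ : involute w * (ι Q (v a) * ι Q (v b) * ι Q (v c))
        = involute (w * ι Q (v a) * ι Q (v b)) * ι Q (v c) := by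
      simp only [map_mul, involute_ι, neg_mul_neg, mul_assoc]
    have h₂ : w * ι Q (v a) * ι Q (v b) = involute (-(involute w * ι Q (v a))) * ι Q (v b) := by
      simp only [map_neg, map_mul, involute_involute, involute_ι, mul_neg, neg_neg]
    rw [h₁, hN, h₂, hN, map_neg, hN]
    simp only [map_neg, Module.End.mul_apply]
  simp only [Finset.sum_mul, Finset.mul_sum, smul_mul_assoc, mul_smul_comm, map_sub, map_sum,
    map_smul, hleft, hright, LinearMap.sum_apply, LinearMap.smul_apply, LinearMap.add_apply,
    smul_neg, Finset.sum_neg_distrib, sub_neg_eq_add, smul_add, Finset.sum_add_distrib]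

variable [Invertible (2 : R)]

theorem equivExterior_ι_mul (m : M) (x : CliffordAlgebra Q) :
    equivExterior Q (ι Q m * x)
      = ExteriorAlgebra.ι R m * equivExterior Q x
        + contractLeft (Q.associated m) (equivExterior Q x) := by
  simp only [equivExterior, changeFormEquiv_apply, changeForm_ι_mul, map_neg, LinearMap.neg_apply,
    sub_neg_eq_add]

theorem equivExterior_contractLeft (d : Module.Dual R M) (x : CliffordAlgebra Q) :
    equivExterior Q (contractLeft d x) = contractLeft d (equivExterior Q x) :=
  changeForm_contractLeft changeForm.associated_neg_proof d x

theorem equivExterior_involute_mul_ι (m : M) (x : CliffordAlgebra Q) :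
    equivExterior Q (involute x * ι Q m)
      = ExteriorAlgebra.ι R m * equivExterior Q x
        - contractLeft (Q.associated m) (equivExterior Q x) := by
  have h : involute x * ι Q m = ι Q m * x - contractLeft (Q.polarBilin m) x := by
    rw [← ι_mul_sub_involute_mul_ι]; abel
  rw [h, map_sub, equivExterior_ι_mul, equivExterior_contractLeft,
    ← QuadraticMap.two_nsmul_associated R, LinearMap.smul_apply, map_nsmul, LinearMap.smul_apply,
    two_nsmul]
  abel

theorem equivExterior_prod_map_ι {l : List M}
    (hl : l.Pairwise fun u v => Q.associated u v = 0) :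
    equivExterior Q (l.map (ι Q)).prod = (l.map (ExteriorAlgebra.ι R)).prod := by
  induction l with
  | nil => simp
  | cons m l ih =>
    rw [List.pairwise_cons] at hl
    rw [List.map_cons, List.prod_cons, equivExterior_ι_mul, ih hl.2,
      contractLeft_prod_map_ι_eq_zero _ hl.1, add_zero]
    rfl

theorem eq_equivExterior_of_basis {I : Type*} [LinearOrder I] (b : Module.Basis I R M)
    (hb : Pairwise fun i j => Q.associated (b i) (b j) = 0)
    (σ : CliffordAlgebra Q ≃ₗ[R] ExteriorAlgebra R M)
    (hσ : ∀ l : List I, l.Pairwise (· < ·) →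
      σ (l.map fun i => ι Q (b i)).prod = (l.map fun i => ExteriorAlgebra.ι R (b i)).prod) :
    σ = equivExterior Q := by
  suffices σ.symm = (equivExterior Q).symm by
    simpa only [LinearEquiv.symm_symm] using congrArg LinearEquiv.symm this
  refine b.ExteriorAlgebra.ext' fun s => ?_
  have hs := (Finset.sortedLT_sort s).pairwise
  have horth : (s.sort.map b).Pairwise fun u v => Q.associated u v = 0 :=
    List.pairwise_map.mpr (hs.imp fun h => hb h.ne)
  have hE := equivExterior_prod_map_ι horth
  simp only [List.map_map, Function.comp_def] at hE
  rw [b.exteriorAlgebra_apply_eq_prod, (LinearEquiv.symm_apply_eq σ).mpr (hσ _ hs).symm,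
    LinearEquiv.eq_symm_apply, hE]

theorem equivExterior_superCommutator_cubic [IsAddTorsionFree R] {I : Type*} [Fintype I]
    (v : I → M) (hv : Pairwise fun a b => Q.associated (v a) (v b) = 0)
    {f : I → I → I → R} (hf : IsTotallyAntisymm f) (w : CliffordAlgebra Q) :
    equivExterior Q ((∑ a, ∑ b, ∑ c, f a b c • (ι Q (v a) * ι Q (v b) * ι Q (v c))) * w
        - involute w * ∑ a, ∑ b, ∑ c, f a b c • (ι Q (v a) * ι Q (v b) * ι Q (v c)))
      = (6 : R) • ∑ a, ∑ b, ∑ c, f a b c • (ExteriorAlgebra.ι R (v b) *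
          (ExteriorAlgebra.ι R (v c) * contractLeft (Q.associated (v a)) (equivExterior Q w)))
        + (2 : R) • ∑ a, ∑ b, ∑ c, f a b c • contractLeft (Q.associated (v a))
          (contractLeft (Q.associated (v b))
            (contractLeft (Q.associated (v c)) (equivExterior Q w))) := by
  set ℓ : I → Module.End R (ExteriorAlgebra R M) :=
    fun a => LinearMap.mulLeft R (ExteriorAlgebra.ι R (v a))
  set κ : I → Module.End R (ExteriorAlgebra R M) := fun a => contractLeft (Q.associated (v a))
  have hanti : ∀ a b, a ≠ b → κ a * ℓ b = -(ℓ b * κ a) := by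
    intro a b hab
    ext u
    simp [κ, ℓ, contractLeft_ι_mul, hv hab]
  rw [← LinearEquiv.coe_coe, map_cubic_mul_sub_involute_mul _ v (fun a => ℓ a + κ a)
    (fun a => ℓ a - κ a) (fun a => equivExterior_ι_mul (v a))
    (fun a => equivExterior_involute_mul_ι (v a)),
    hf.sum_smul_cube_add_reverse_cube ℓ κ hanti]
  simp only [ℓ, κ, LinearMap.add_apply, LinearMap.smul_apply, LinearMap.sum_apply,
    Module.End.mul_apply, LinearMap.mulLeft_apply, LinearEquiv.coe_coe]

end CliffordAlgebra

/-- Under the symbol map, the super-commutator with `γ` becomes the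
Koszul-type operator `−½ f_{abc} y_b y_c ι_a − (1/24) f_{abc} ι_a ι_b ι_c` on `∧𝔤`:
for all `w ∈ Cl(𝔤)`, `σ(γ·w − ε(w)·γ) = −½ ∑ f_{abc} e_b ∧ e_c ∧ ι_a(σ w)
− (1/24) ∑ f_{abc} (ι_a ι_b ι_c)(σ w)`. -/
theorem symbol_of_ad_gamma
    {n : ℕ} {g : Type*} [LieRing g] [LieAlgebra ℝ g]
    -- the ad-invariant inner product, as a symmetric bilinear form
    (ip : LinearMap.BilinForm ℝ g)
    (ip_symm : ∀ v w : g, ip v w = ip w v)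
    (ip_inv : ∀ v w z : g, ip ⁅v, w⁆ z + ip w ⁅v, z⁆ = 0)
    -- an orthonormal basis
    (e : Module.Basis (Fin n) ℝ g)
    (he : ∀ a b, ip (e a) (e b) = if a = b then (1 : ℝ) else 0)
    -- the quadratic form Q(v) = ½⟨v,v⟩ and its Clifford algebra
    (Q : QuadraticForm ℝ g)
    (hQ : ∀ v, Q v = (1 / 2 : ℝ) * ip v v)
    -- structure constants
    (f : Fin n → Fin n → Fin n → ℝ)
    (hf : ∀ a b c, f a b c = ip ⁅e a, e b⁆ (e c))
    -- the Clifford generators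
    (x : Fin n → CliffordAlgebra Q)
    (hx : ∀ a, x a = CliffordAlgebra.ι Q (e a))
    -- contraction operators ι_a on the exterior algebra ∧𝔤: the odd derivations
    -- determined by ι_a(e_b) = δ_{ab}
    (ic : Fin n → Module.End ℝ (ExteriorAlgebra ℝ g))
    (hic_gen : ∀ a b, ic a (ExteriorAlgebra.ι ℝ (e b))
      = algebraMap ℝ (ExteriorAlgebra ℝ g) (if a = b then 1 else 0))
    (hic_der : ∀ a (u v : ExteriorAlgebra ℝ g),
      ic a (u * v) = ic a u * v + CliffordAlgebra.involute u * ic a v)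
    -- the symbol map σ : Cl(𝔤) → ∧𝔤, determined by
    -- σ(x_{j₁}⋯x_{j_k}) = e_{j₁}∧⋯∧e_{j_k} for j₁ < ⋯ < j_k (k = 0 gives σ(1) = 1)
    (σ : CliffordAlgebra Q ≃ₗ[ℝ] ExteriorAlgebra ℝ g)
    (hσ : ∀ l : List (Fin n), l.Pairwise (· < ·) →
      σ (l.map x).prod = (l.map fun a => ExteriorAlgebra.ι ℝ (e a)).prod)
    -- the element γ
    (γ : CliffordAlgebra Q)
    (hγ : γ = (-(1 / 6 : ℝ)) • ∑ a, ∑ b, ∑ c, f a b c • (x a * x b * x c)) :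
    ∀ w : CliffordAlgebra Q,
      σ (γ * w - CliffordAlgebra.involute w * γ)
        = (-(1 / 2 : ℝ)) • ∑ a, ∑ b, ∑ c, f a b c •
            (ExteriorAlgebra.ι ℝ (e b) * (ExteriorAlgebra.ι ℝ (e c) * ic a (σ w)))
          - (1 / 24 : ℝ) • ∑ a, ∑ b, ∑ c, f a b c • ic a (ic b (ic c (σ w))) := by
  intro w
  obtain rfl : x = fun a => CliffordAlgebra.ι Q (e a) := funext hx
  obtain rfl : f = fun a b c => ip ⁅e a, e b⁆ (e c) :=
    funext fun a => funext fun b => funext (hf a b)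
  have hassoc := QuadraticMap.associated_eq_half_smul_of_apply_eq ip_symm hQ
  have horth : Pairwise fun a b => Q.associated (e a) (e b) = 0 := fun a b hab => by
    simp only [hassoc, LinearMap.smul_apply, he, if_neg hab, smul_zero]
  obtain rfl : σ = CliffordAlgebra.equivExterior Q :=
    CliffordAlgebra.eq_equivExterior_of_basis e horth σ hσ
  obtain rfl : ic = fun a => CliffordAlgebra.contractLeft (ip (e a)) := funext fun a =>
    ExteriorAlgebra.eq_contractLeft_of_basis e _ _ (fun b => by rw [hic_gen, he]) (hic_der a)
  subst hγ
  rw [smul_mul_assoc, mul_smul_comm, ← smul_sub, map_smul,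
    CliffordAlgebra.equivExterior_superCommutator_cubic e horth
      (isTotallyAntisymm_structureConstants ip ip_symm ip_inv e), hassoc]
  simp only [LinearMap.smul_apply, map_smul, mul_smul_comm, smul_add, Finset.smul_sum,
    ← Finset.sum_add_distrib, ← Finset.sum_sub_distrib]
  refine sum_congr rfl fun a _ => sum_congr rfl fun b _ => sum_congr rfl fun c _ => ?_
  module
end
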